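/- If ρ = ∑_k p_k A_k ⊗ B_k is a separable density matrix on C^{d_A} ⊗ C^{d_B} (with p_k ≥ 0 summing to 1 and A_k, B_k density matrices), then the trace norm of its realignment satisfies ‖R(ρ)‖₁ ≤ 1. Hence ‖R(ρ)‖₁ > 1 implies ρ is entangled (the CCNR criterion). -/

import Mathlib

open Matrix Kronecker
open scoped ComplexOrder

/-- The realignment map for a bipartite matrix on `ℂ^{d_A} ⊗ ℂ^{d_B}`:
`R(ρ)_{(i,j),(k,l)} = ρ_{(i,k),(j,l)}`. -/
def realignRect (dA dB : ℕ)
    (X : Matrix (Fin dA × Fin dB) (Fin dA × Fin dB) ℂ) :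
    Matrix (Fin dA × Fin dA) (Fin dB × Fin dB) ℂ :=
  Matrix.of fun p q => X (p.1, q.1) (p.2, q.2)

/-- The positive semidefinite square root of a positive semidefinite matrix
(the former Mathlib `Matrix.PosSemidef.sqrt`, spelled out with its old definition). -/
noncomputable def posSemidefSqrt {n : Type*} [Fintype n] [DecidableEq n] {A : Matrix n n ℂ}
    (hA : A.PosSemidef) : Matrix n n ℂ :=
  hA.1.eigenvectorUnitary.1 * diagonal ((↑) ∘ (√·) ∘ hA.1.eigenvalues) *
    (star hA.1.eigenvectorUnitary : Matrix n n ℂ)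

/-- The trace norm `‖X‖₁ = Tr √(X Xᴴ)` of a (possibly rectangular) complex matrix. -/
noncomputable def traceNorm {m n : Type*} [Fintype m] [Fintype n] [DecidableEq m]
    (X : Matrix m n ℂ) : ℝ :=
  (posSemidefSqrt (Matrix.posSemidef_self_mul_conjTranspose X)).trace.re

/-- `ρ` is separable: a convex combination of products of density matrices. -/
def SeparableState (dA dB : ℕ)
    (ρ : Matrix (Fin dA × Fin dB) (Fin dA × Fin dB) ℂ) : Prop :=
  ∃ (K : ℕ) (p : Fin K → ℝ) (A : Fin K → Matrix (Fin dA) (Fin dA) ℂ)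
    (B : Fin K → Matrix (Fin dB) (Fin dB) ℂ),
    (∀ k, 0 ≤ p k) ∧ (∑ k, p k = 1) ∧
    (∀ k, (A k).PosSemidef ∧ Matrix.trace (A k) = 1) ∧
    (∀ k, (B k).PosSemidef ∧ Matrix.trace (B k) = 1) ∧
    ρ = ∑ k, ((p k : ℝ) : ℂ) • (A k ⊗ₖ B k)

/-!
The trace norm is attained by pairing against a contraction: `‖X‖₁ = Re Tr (Yᴴ X)` for
`Y = (X Xᴴ)^{-1/2} X`, with the inverse taken on the support. Realignment is linear and sends
`A ⊗ B` to the rank-one matrix `vec Aᵀ (vec Bᵀ)ᵀ`; a contraction pairs with it to at most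
`‖vec A‖₂ ‖vec B‖₂ = √(Tr A²) √(Tr B²) ≤ 1` for density matrices, and by convexity
`Re Tr (Yᴴ R(ρ)) ≤ 1` for every separable `ρ`.
-/

open scoped MatrixOrder
open WithLp

variable {𝕜 m n : Type*} [RCLike 𝕜] [Fintype m] [Fintype n] [DecidableEq m]

namespace Matrix

lemma IsHermitian.continuousOn_spectrum {A : Matrix m m 𝕜} (hA : A.IsHermitian) (f : ℝ → ℝ) :
    ContinuousOn f (spectrum ℝ A) :=
  have hfin : (spectrum ℝ A).Finite :=
    hA.spectrum_real_eq_range_eigenvalues ▸ Set.finite_range _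
  hfin.continuousOn f

lemma IsHermitian.trace_cfc {A : Matrix m m 𝕜} (hA : A.IsHermitian) (f : ℝ → ℝ) :
    (cfc f A).trace = ∑ i, (f (hA.eigenvalues i) : 𝕜) := by
  rw [hA.cfc_eq, IsHermitian.cfc, Unitary.conjStarAlgAut_apply, trace_mul_cycle,
    Unitary.coe_star_mul_self, Matrix.one_mul, trace_diagonal]
  rfl

lemma PosSemidef.norm_toLp_vec_le_re_trace {A : Matrix m m 𝕜} (hA : A.PosSemidef) :
    ‖toLp 2 (vec A)‖ ≤ RCLike.re A.trace := by
  have hnonneg := hA.eigenvalues_nonneg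
  have hsq : ‖toLp 2 (vec A)‖ ^ 2 = ∑ i, hA.1.eigenvalues i ^ 2 := by
    rw [@norm_sq_eq_re_inner 𝕜, EuclideanSpace.inner_toLp_toLp, dotProduct_comm,
      star_vec_dotProduct_vec, hA.1.eq, ← sq, ← cfc_pow_id (R := ℝ) A 2 hA.1.isSelfAdjoint,
      hA.1.trace_cfc]
    simp only [map_sum, RCLike.ofReal_re]
  have htr : RCLike.re A.trace = ∑ i, hA.1.eigenvalues i := by
    simp only [hA.1.trace_eq_sum_eigenvalues, map_sum, RCLike.ofReal_re]
  refine (sq_le_sq₀ (norm_nonneg _) (htr ▸ Finset.sum_nonneg fun i _ => hnonneg i)).mp ?_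
  rw [hsq, htr]
  exact Finset.sum_sq_le_sq_sum_of_nonneg fun i _ => hnonneg i

lemma PosSemidef.norm_toLp_vec_transpose_le_one {A : Matrix m m 𝕜} (hA : A.PosSemidef)
    (htr : A.trace = 1) : ‖toLp 2 (vec Aᵀ)‖ ≤ 1 := by
  simpa [htr] using hA.transpose.norm_toLp_vec_le_re_trace

lemma norm_toLp_conjTranspose_mulVec_le {Y : Matrix m n 𝕜} (hY : Y * Yᴴ ≤ 1) (u : m → 𝕜) :
    ‖toLp 2 (Yᴴ *ᵥ u)‖ ≤ ‖toLp 2 u‖ := by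
  have h := (le_iff.mp hY).re_dotProduct_nonneg u
  rw [sub_mulVec, one_mulVec, dotProduct_sub, map_sub, sub_nonneg, ← mulVec_mulVec,
    dotProduct_mulVec, ← conjTranspose_conjTranspose Y, ← star_mulVec,
    conjTranspose_conjTranspose] at h
  refine (sq_le_sq₀ (norm_nonneg _) (norm_nonneg _)).mp ?_
  rw [@norm_sq_eq_re_inner 𝕜, @norm_sq_eq_re_inner 𝕜, EuclideanSpace.inner_toLp_toLp,
    EuclideanSpace.inner_toLp_toLp, dotProduct_comm, dotProduct_comm u]
  exact h

lemma re_trace_conjTranspose_mul_vecMulVec_le {Y : Matrix m n 𝕜} (hY : Y * Yᴴ ≤ 1)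
    (u : m → 𝕜) (v : n → 𝕜) :
    RCLike.re (Yᴴ * vecMulVec u v).trace ≤ ‖toLp 2 u‖ * ‖toLp 2 v‖ := by
  have hinner : (Yᴴ * vecMulVec u v).trace = inner 𝕜 (toLp 2 (star v)) (toLp 2 (Yᴴ *ᵥ u)) := by
    rw [mul_vecMulVec, trace_vecMulVec, EuclideanSpace.inner_toLp_toLp, star_star]
  have hstar : ‖toLp 2 (star v)‖ = ‖toLp 2 v‖ := by
    simp [EuclideanSpace.norm_eq]
  calc RCLike.re (Yᴴ * vecMulVec u v).trace
      ≤ ‖toLp 2 (star v)‖ * ‖toLp 2 (Yᴴ *ᵥ u)‖ :=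
        hinner ▸ (RCLike.re_le_norm _).trans (norm_inner_le_norm _ _)
    _ ≤ ‖toLp 2 u‖ * ‖toLp 2 v‖ := by
        rw [hstar, mul_comm]
        exact mul_le_mul_of_nonneg_right (norm_toLp_conjTranspose_mulVec_le hY u) (norm_nonneg _)

end Matrix

lemma posSemidefSqrt_eq_cfc {A : Matrix m m ℂ} (hA : A.PosSemidef) :
    posSemidefSqrt hA = cfc Real.sqrt A := by
  rw [hA.1.cfc_eq, IsHermitian.cfc, Unitary.conjStarAlgAut_apply]
  rfl

lemma exists_contraction_re_trace_eq_traceNorm (X : Matrix m n ℂ) :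
    ∃ Y : Matrix m n ℂ, Y * Yᴴ ≤ 1 ∧ (Yᴴ * X).trace.re = traceNorm X := by
  have hS : IsSelfAdjoint (X * Xᴴ) := (posSemidef_self_mul_conjTranspose X).1
  have hcont := hS.isHermitian.continuousOn_spectrum
  -- `(√0)⁻¹ = 0`, so `D` inverts `√(X Xᴴ)` on its support and vanishes on its kernel.
  set D := cfc (fun t => (√t)⁻¹) (X * Xᴴ) with hD_def
  have hD : Dᴴ = D := (cfc_predicate _ _ : IsSelfAdjoint D)
  refine ⟨D * X, ?_, ?_⟩
  · have hDX : D * X * (D * X)ᴴ = cfc (fun t => (√t)⁻¹ * t * (√t)⁻¹) (X * Xᴴ) := by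
      rw [cfc_mul _ _ _ (hcont _) (hcont _), cfc_mul _ _ _ (hcont _) (hcont _),
        cfc_id' ℝ (X * Xᴴ), ← hD_def, conjTranspose_mul, hD]
      simp only [Matrix.mul_assoc]
    rw [hDX, ← sub_nonneg, ← cfc_one ℝ (X * Xᴴ), ← cfc_sub _ _ _ (hcont _) (hcont _)]
    refine cfc_nonneg fun t _ => ?_
    rw [Pi.one_apply, sub_nonneg, inv_mul_eq_div, Real.div_sqrt]
    exact mul_inv_le_one
  · have hsqrt : cfc Real.sqrt (X * Xᴴ) = D * (X * Xᴴ) := calc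
      _ = cfc (fun t => (√t)⁻¹ * id t) (X * Xᴴ) :=
        cfc_congr fun t _ => by rw [id, inv_mul_eq_div, Real.div_sqrt]
      _ = D * (X * Xᴴ) := by rw [cfc_mul _ _ _ (hcont _) (hcont _), cfc_id ℝ (X * Xᴴ)]
    rw [traceNorm, posSemidefSqrt_eq_cfc, hsqrt, conjTranspose_mul, hD, Matrix.mul_assoc,
      trace_mul_comm, Matrix.mul_assoc]

section Realignment

variable {dA dB : ℕ}

lemma realignRect_kronecker (A : Matrix (Fin dA) (Fin dA) ℂ) (B : Matrix (Fin dB) (Fin dB) ℂ) :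
    realignRect dA dB (A ⊗ₖ B) = vecMulVec (vec Aᵀ) (vec Bᵀ) :=
  rfl

lemma realignRect_sum {ι : Type*} (s : Finset ι)
    (X : ι → Matrix (Fin dA × Fin dB) (Fin dA × Fin dB) ℂ) :
    realignRect dA dB (∑ i ∈ s, X i) = ∑ i ∈ s, realignRect dA dB (X i) := by
  ext
  simp [realignRect, Matrix.sum_apply]

lemma realignRect_smul (c : ℂ) (X : Matrix (Fin dA × Fin dB) (Fin dA × Fin dB) ℂ) :
    realignRect dA dB (c • X) = c • realignRect dA dB X :=
  rfl

lemma SeparableState.re_trace_conjTranspose_mul_realignRect_le_one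
    {ρ : Matrix (Fin dA × Fin dB) (Fin dA × Fin dB) ℂ} (hρ : SeparableState dA dB ρ)
    {Y : Matrix (Fin dA × Fin dA) (Fin dB × Fin dB) ℂ} (hY : Y * Yᴴ ≤ 1) :
    (Yᴴ * realignRect dA dB ρ).trace.re ≤ 1 := by
  obtain ⟨K, p, A, B, hp, hp_sum, hA, hB, rfl⟩ := hρ
  have hprod (k : Fin K) : (Yᴴ * realignRect dA dB (A k ⊗ₖ B k)).trace.re ≤ 1 := calc
    _ ≤ ‖toLp 2 (vec (A k)ᵀ)‖ * ‖toLp 2 (vec (B k)ᵀ)‖ := by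
      rw [realignRect_kronecker]
      exact re_trace_conjTranspose_mul_vecMulVec_le hY _ _
    _ ≤ 1 * 1 := mul_le_mul ((hA k).1.norm_toLp_vec_transpose_le_one (hA k).2)
      ((hB k).1.norm_toLp_vec_transpose_le_one (hB k).2) (norm_nonneg _) zero_le_one
    _ = 1 := one_mul 1
  calc (Yᴴ * realignRect dA dB (∑ k, ((p k : ℝ) : ℂ) • (A k ⊗ₖ B k))).trace.re
      = ∑ k, p k * (Yᴴ * realignRect dA dB (A k ⊗ₖ B k)).trace.re := by
        simp only [realignRect_sum, realignRect_smul, Matrix.mul_sum, Matrix.mul_smul, trace_sum,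
          trace_smul, smul_eq_mul, Complex.re_sum, Complex.re_ofReal_mul]
    _ ≤ ∑ k, p k * 1 := by gcongr with k; exacts [hp k, hprod k]
    _ = 1 := by simp [hp_sum]

end Realignment

/-- CCNR criterion: every separable density matrix satisfies `‖R(ρ)‖₁ ≤ 1`; hence a
state with `‖R(ρ)‖₁ > 1` is entangled (not separable). -/
theorem ccnr_criterion (dA dB : ℕ)
    (ρ : Matrix (Fin dA × Fin dB) (Fin dA × Fin dB) ℂ) :
    (SeparableState dA dB ρ → traceNorm (realignRect dA dB ρ) ≤ 1) ∧
    (1 < traceNorm (realignRect dA dB ρ) → ¬ SeparableState dA dB ρ) := by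
  have hsep (hρ : SeparableState dA dB ρ) : traceNorm (realignRect dA dB ρ) ≤ 1 := by
    obtain ⟨Y, hY, hYX⟩ := exists_contraction_re_trace_eq_traceNorm (realignRect dA dB ρ)
    exact hYX ▸ hρ.re_trace_conjTranspose_mul_realignRect_le_one hY
  exact ⟨hsep, fun hgt hρ => (hsep hρ).not_gt hgt⟩
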